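/- There is no ordered pair (I,J) of disjoint subsets of {1,…,n} with |I|+|J| = k that is self-dual and satisfies 0 ≤ t_{(I,J)} < k/2. -/

import Mathlib

noncomputable section

open Finset

/-- The `i`-th standard basis vector `ε_i` of `ℝ^n` (0-indexed: `eps n i` is `ε_{i+1}`). -/
def eps (n : ℕ) (i : Fin n) : Fin n → ℝ := fun m => if m = i then 1 else 0

/-- The positive roots of type `B_n`: `ε_i - ε_j` and `ε_i + ε_j` for `i < j`, and all `ε_i`. -/
def PosRoot (n : ℕ) : Set (Fin n → ℝ) :=
  {v | (∃ i j : Fin n, i < j ∧ (v = eps n i - eps n j ∨ v = eps n i + eps n j)) ∨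
       (∃ i : Fin n, v = eps n i)}

/-- The negative roots of type `B_n`. -/
def NegRoot (n : ℕ) : Set (Fin n → ℝ) := {v | -v ∈ PosRoot n}

/-- The simple roots: `simpleRoot n l` is `α_{l+1}`, i.e. `ε_{l+1} - ε_{l+2}` if `l+1 < n`
and `ε_n` for the last one. -/
def simpleRoot (n : ℕ) (l : Fin n) : Fin n → ℝ :=
  if h : (l : ℕ) + 1 < n then eps n l - eps n ⟨(l : ℕ) + 1, h⟩ else eps n l

/-- The number of elements of `S` smaller than `x` (the 0-based rank of `x` in `S`). -/
def rk {n : ℕ} (S : Finset (Fin n)) (x : Fin n) : ℕ := (S.filter (fun y => y < x)).card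

/-- The `l`-th element (0-indexed) of `S` in increasing order. -/
def elt {n : ℕ} (S : Finset (Fin n)) (l : ℕ) (h : l < S.card) : Fin n :=
  (S.orderIsoOfFin rfl ⟨l, h⟩).1

/-- The sign `η_x` attached to the pair `(I, J)`: `-1` on `I` and `1` elsewhere. -/
def sgn {n : ℕ} (I : Finset (Fin n)) (x : Fin n) : ℝ := if x ∈ I then -1 else 1

/-- The 0-based index of the coordinate to which `w_{(I,J)}` sends the `x`-th coordinate:
`i_l ↦ k+1-l`, `j_l ↦ l`, `r_l ↦ k+l` (in the 1-based numbering of the paper). -/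
def tgt {n : ℕ} (k : ℕ) (I J : Finset (Fin n)) (x : Fin n) : ℕ :=
  if x ∈ I then k - 1 - rk I x
  else if x ∈ J then rk J x
  else k + rk ((I ∪ J)ᶜ) x

/-- The Kostant representative `w_{(I,J)}` as a linear map on `ℝ^n`, determined by
`w(ε_{i_l}) = -ε_{k+1-l}`, `w(ε_{j_l}) = ε_l`, `w(ε_{r_l}) = ε_{k+l}`. -/
def wIJ {n : ℕ} (k : ℕ) (I J : Finset (Fin n)) (v : Fin n → ℝ) : Fin n → ℝ :=
  fun m => ∑ x : Fin n, (if tgt k I J x = (m : ℕ) then sgn I x * v x else 0)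

/-- The inverse of `w_{(I,J)}`. -/
def wIJinv {n : ℕ} (k : ℕ) (I J : Finset (Fin n)) (v : Fin n → ℝ) : Fin n → ℝ :=
  fun x => sgn I x * ∑ m : Fin n, (if tgt k I J x = (m : ℕ) then v m else 0)

/-- The Weyl group of type `B_n`, realized as the group of linear automorphisms permuting
the basis vectors up to signs. -/
def WeylB (n : ℕ) : Set ((Fin n → ℝ) ≃ₗ[ℝ] (Fin n → ℝ)) :=
  {w | ∃ (σ : Equiv.Perm (Fin n)) (η : Fin n → ℝ),
    (∀ i, η i = 1 ∨ η i = -1) ∧ ∀ i, w (eps n i) = η i • eps n (σ i)}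

/-- The set `W^{P_k}` of Kostant representatives: `w ∈ W` such that `w⁻¹(α_l)` is a
positive root for all `l ≠ k` (1-based `l`). -/
def WP (n k : ℕ) : Set ((Fin n → ℝ) ≃ₗ[ℝ] (Fin n → ℝ)) :=
  {w | w ∈ WeylB n ∧ ∀ l : Fin n, (l : ℕ) + 1 ≠ k → w.symm (simpleRoot n l) ∈ PosRoot n}

/-- The length of `w`: the number of positive roots mapped by `w` to negative roots. -/
def len {n : ℕ} (w : (Fin n → ℝ) → (Fin n → ℝ)) : ℕ :=
  Set.ncard {β | β ∈ PosRoot n ∧ w β ∈ NegRoot n}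

/-- `m = max({l ∈ {1,…,𝕛} : j_l < i for all i ∈ I} ∪ {0})`. -/
def mIJ {n : ℕ} (I J : Finset (Fin n)) : ℕ :=
  (insert 0 ((Finset.Icc 1 J.card).filter
    (fun l => ∃ x ∈ J, rk J x + 1 = l ∧ ∀ i ∈ I, x < i))).max' (insert_nonempty _ _)

/-- `ρ = Σ_i (n - i + 1/2) ε_i` (1-based `i`). -/
def rho (n : ℕ) : Fin n → ℝ := fun i => (n : ℝ) - ((i : ℕ) + 1) + 1 / 2

/-- The vector `λ + ρ` in `ℝ^n`. -/
def lamRho (n : ℕ) (lam : Fin n → ℤ) : Fin n → ℝ := fun i => (lam i : ℝ) + rho n i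

/-- `t_{(I,J)} = Σ_l (λ_{i_l} - i_l) - Σ_l (λ_{j_l} - j_l) + (𝕚 - 𝕛)(n + 1/2)`. -/
def tIJ {n : ℕ} (lam : Fin n → ℤ) (I J : Finset (Fin n)) : ℝ :=
  (∑ l : Fin I.card,
    ((lam (elt I (l : ℕ) l.isLt) : ℝ) - (((elt I (l : ℕ) l.isLt : Fin n) : ℕ) + 1)))
  - (∑ l : Fin J.card,
    ((lam (elt J (l : ℕ) l.isLt) : ℝ) - (((elt J (l : ℕ) l.isLt : Fin n) : ℕ) + 1)))
  + ((I.card : ℝ) - (J.card : ℝ)) * ((n : ℝ) + 1 / 2)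

/-- `c`: the arithmetic mean of the first `k` coordinates of `w_{(I,J)}(λ+ρ) - ρ`. -/
def cIJ {n : ℕ} (k : ℕ) (lam : Fin n → ℤ) (I J : Finset (Fin n)) : ℝ :=
  (∑ m ∈ Finset.univ.filter (fun m : Fin n => (m : ℕ) < k),
    (wIJ k I J (lamRho n lam) m - rho n m)) / (k : ℝ)

/-- `μ_{(I,J)} = w_{(I,J)}(λ+ρ) - ρ - c·(ε_1 + … + ε_k)`. -/
def muIJ {n : ℕ} (k : ℕ) (lam : Fin n → ℤ) (I J : Finset (Fin n)) : Fin n → ℝ :=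
  fun m => wIJ k I J (lamRho n lam) m - rho n m -
    cIJ k lam I J * (∑ i ∈ Finset.univ.filter (fun i : Fin n => (i : ℕ) < k), eps n i) m

/-- `(I,J)` is self-dual: the `l`-th coordinate of `μ_{(I,J)}` is the negative of its
`(k+1-l)`-th coordinate for all `1 ≤ l ≤ k`. -/
def SelfDual {n : ℕ} (k : ℕ) (lam : Fin n → ℤ) (I J : Finset (Fin n)) : Prop :=
  ∀ (l : ℕ) (_ : 1 ≤ l) (_ : l ≤ k) (h1 : l - 1 < n) (h2 : k - l < n),
    muIJ k lam I J ⟨l - 1, h1⟩ = - muIJ k lam I J ⟨k - l, h2⟩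

/-- The set `𝒮_k` of ordered pairs `(I,J)` of disjoint subsets with `|I| + |J| = k`. -/
def SIJ (n k : ℕ) : Set (Finset (Fin n) × Finset (Fin n)) :=
  {p | Disjoint p.1 p.2 ∧ p.1.card + p.2.card = k}

section Helpers
variable {n : ℕ}

lemma rk_lt_rk {S : Finset (Fin n)} {x y : Fin n} (hx : x ∈ S) (hxy : x < y) :
    rk S x < rk S y := by
  apply Finset.card_lt_card
  constructor
  · intro a ha
    simp only [Finset.mem_filter] at ha ⊢
    exact ⟨ha.1, lt_trans ha.2 hxy⟩
  · intro hsub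
    have hmem : x ∈ S.filter (fun z => z < y) := Finset.mem_filter.mpr ⟨hx, hxy⟩
    have := hsub hmem
    simp [Finset.mem_filter] at this

lemma rk_lt_card {S : Finset (Fin n)} {x : Fin n} (hx : x ∈ S) : rk S x < S.card := by
  apply Finset.card_lt_card
  constructor
  · exact Finset.filter_subset _ _
  · intro hsub
    have := hsub hx
    simp [Finset.mem_filter] at this

lemma rk_inj {S : Finset (Fin n)} {x y : Fin n} (hx : x ∈ S) (hy : y ∈ S)
    (h : rk S x = rk S y) : x = y := by
  rcases lt_trichotomy x y with hlt | heq | hgt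
  · exact absurd h (Nat.ne_of_lt (rk_lt_rk hx hlt))
  · exact heq
  · exact absurd h.symm (Nat.ne_of_lt (rk_lt_rk hy hgt))

lemma rk_min {S : Finset (Fin n)} (hS : S.Nonempty) : rk S (S.min' hS) = 0 := by
  simp only [rk, Finset.card_eq_zero]
  rw [Finset.filter_eq_empty_iff]
  intro y hy
  exact not_lt.mpr (S.min'_le y hy)

lemma rk_max {S : Finset (Fin n)} (hS : S.Nonempty) : rk S (S.max' hS) = S.card - 1 := by
  have : S.filter (fun y => y < S.max' hS) = S.erase (S.max' hS) := by
    ext y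
    simp only [Finset.mem_filter, Finset.mem_erase]
    constructor
    · rintro ⟨h1, h2⟩; exact ⟨ne_of_lt h2, h1⟩
    · rintro ⟨h1, h2⟩; exact ⟨h2, lt_of_le_of_ne (S.le_max' y h2) h1⟩
  rw [rk, this, Finset.card_erase_of_mem (S.max'_mem hS)]

lemma sum_elt (S : Finset (Fin n)) (f : Fin n → ℝ) :
    ∑ l : Fin S.card, f (elt S (l : ℕ) l.isLt) = ∑ x ∈ S, f x := by
  rw [← Finset.sum_attach S f]
  exact Fintype.sum_bijective (S.orderIsoOfFin rfl) (S.orderIsoOfFin rfl).bijective _ _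
    (fun l => rfl)

lemma lamRho_eq (lam : Fin n → ℤ) (x : Fin n) :
    lamRho n lam x = ((lam x + n - (x : ℕ) - 1 : ℤ) : ℝ) + 1 / 2 := by
  have hx : (x : ℕ) < n := x.isLt
  simp only [lamRho, rho]
  push_cast
  ring

lemma wIJ_eq {k : ℕ} {I J : Finset (Fin n)} (v : Fin n → ℝ) (m : Fin n) (x₀ : Fin n)
    (h : tgt k I J x₀ = (m : ℕ)) (hu : ∀ x, tgt k I J x = (m : ℕ) → x = x₀) :
    wIJ k I J v m = sgn I x₀ * v x₀ := by
  rw [wIJ, Finset.sum_eq_single x₀]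
  · simp [h]
  · intro b _ hb
    rw [if_neg]
    intro hb'
    exact hb (hu b hb')
  · intro hx; exact absurd (Finset.mem_univ x₀) hx

end Helpers

section Helpers2
variable {n k : ℕ} {I J : Finset (Fin n)}

lemma tgt_I {x : Fin n} (hx : x ∈ I) : tgt k I J x = k - 1 - rk I x := by
  simp [tgt, hx]

lemma tgt_J {x : Fin n} (hxI : x ∉ I) (hx : x ∈ J) : tgt k I J x = rk J x := by
  simp [tgt, hxI, hx]

lemma tgt_O {x : Fin n} (hxI : x ∉ I) (hxJ : x ∉ J) :
    tgt k I J x = k + rk ((I ∪ J)ᶜ) x := by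
  simp [tgt, hxI, hxJ]

lemma tgt_lt_k_iff (hk1 : 1 ≤ k) (hcard : I.card + J.card = k) (x : Fin n) :
    tgt k I J x < k ↔ x ∈ I ∪ J := by
  by_cases hI : x ∈ I
  · simp only [tgt_I hI, Finset.mem_union]
    constructor
    · intro _; exact Or.inl hI
    · intro _; omega
  · by_cases hJ : x ∈ J
    · have h1 := rk_lt_card hJ
      simp only [tgt_J hI hJ, Finset.mem_union]
      constructor
      · intro _; exact Or.inr hJ
      · intro _; omega
    · simp only [tgt_O hI hJ, Finset.mem_union]
      constructor
      · intro h; omega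
      · intro h; rcases h with h | h <;> [exact absurd h hI; exact absurd h hJ]

lemma sum_wIJ (hk1 : 1 ≤ k) (hkn : k ≤ n) (hd : Disjoint I J)
    (hcard : I.card + J.card = k) (v : Fin n → ℝ) :
    ∑ m ∈ Finset.univ.filter (fun m : Fin n => (m : ℕ) < k), wIJ k I J v m
      = ∑ x ∈ J, v x - ∑ x ∈ I, v x := by
  simp only [wIJ]
  rw [Finset.sum_comm]
  have h1 : ∀ x : Fin n,
      (∑ m ∈ Finset.univ.filter (fun m : Fin n => (m : ℕ) < k),
        if tgt k I J x = (m : ℕ) then sgn I x * v x else 0)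
      = if x ∈ I ∪ J then sgn I x * v x else 0 := by
    intro x
    by_cases h : x ∈ I ∪ J
    · have htgt : tgt k I J x < k := (tgt_lt_k_iff hk1 hcard x).mpr h
      rw [if_pos h,
        Finset.sum_eq_single (⟨tgt k I J x, lt_of_lt_of_le htgt hkn⟩ : Fin n)]
      · simp
      · intro b hb hbne
        rw [if_neg]
        intro hc
        exact hbne (by apply Fin.ext; simp [← hc])
      · intro hmem
        exact absurd (by simp [htgt]) hmem
    · have htgt : ¬ tgt k I J x < k := fun hc => h ((tgt_lt_k_iff hk1 hcard x).mp hc)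
      rw [if_neg h]
      apply Finset.sum_eq_zero
      intro m hm
      rw [if_neg]
      intro hc
      exact htgt (hc ▸ (Finset.mem_filter.mp hm).2)
  rw [Finset.sum_congr rfl (fun x _ => h1 x)]
  rw [Finset.sum_ite_mem, Finset.univ_inter, Finset.sum_union hd]
  have hI : ∀ x ∈ I, sgn I x * v x = -v x := fun x hx => by simp [sgn, hx]
  have hJ : ∀ x ∈ J, sgn I x * v x = v x := fun x hx => by
    simp [sgn, Finset.disjoint_right.mp hd hx]
  rw [Finset.sum_congr rfl hI, Finset.sum_congr rfl hJ]
  rw [Finset.sum_neg_distrib]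
  ring

lemma eps_sum_eq_one (m : Fin n) (hm : (m : ℕ) < k) :
    (∑ i ∈ Finset.univ.filter (fun i : Fin n => (i : ℕ) < k), eps n i) m = 1 := by
  rw [Finset.sum_apply, Finset.sum_eq_single m]
  · simp [eps]
  · intro b _ hb
    simp only [eps]
    rw [if_neg (Ne.symm hb)]
  · intro h
    exact absurd (by simp [hm]) h

lemma sum_filter_coe (hkn : k ≤ n) (f : ℕ → ℝ) :
    ∑ m ∈ Finset.univ.filter (fun m : Fin n => (m : ℕ) < k), f (m : ℕ)
      = ∑ j ∈ Finset.range k, f j := by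
  exact Finset.sum_bij' (fun (m : Fin n) (_ : m ∈ _) => (m : ℕ))
    (fun j hj => (⟨j, lt_of_lt_of_le (Finset.mem_range.mp hj) hkn⟩ : Fin n))
    (fun a ha => Finset.mem_range.mpr (Finset.mem_filter.mp ha).2)
    (fun a ha => by simp [Finset.mem_range.mp ha])
    (fun a ha => rfl) (fun a ha => rfl) (fun a ha => rfl)

lemma sum_rho (hk1 : 1 ≤ k) (hkn : k ≤ n) :
    ∑ m ∈ Finset.univ.filter (fun m : Fin n => (m : ℕ) < k), rho n m
      = (k : ℝ) * n - (k : ℝ) * k / 2 := by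
  have h : ∀ m ∈ Finset.univ.filter (fun m : Fin n => (m : ℕ) < k),
      rho n m = (fun j : ℕ => (n : ℝ) - (j + 1) + 1 / 2) (m : ℕ) := fun m _ => rfl
  rw [Finset.sum_congr rfl h, sum_filter_coe hkn (fun j : ℕ => (n : ℝ) - ((j : ℝ) + 1) + 1 / 2)]
  have hs : (∑ j ∈ Finset.range k, (j : ℝ)) = (k : ℝ) * ((k : ℝ) - 1) / 2 := by
    have h2 := congrArg (Nat.cast : ℕ → ℝ) (Finset.sum_range_id_mul_two k)
    push_cast [Nat.cast_sub hk1] at h2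
    linarith
  have h3 : ∀ j ∈ Finset.range k, (n : ℝ) - ((j : ℝ) + 1) + 1 / 2
      = ((n : ℝ) - 1 / 2) - (j : ℝ) := by intros; ring
  rw [Finset.sum_congr rfl h3, Finset.sum_sub_distrib, Finset.sum_const,
    Finset.card_range, hs, nsmul_eq_mul]
  ring

end Helpers2

section Helpers3
variable {n k : ℕ} {I J : Finset (Fin n)}

lemma tgt_injective (hk1 : 1 ≤ k) (hcard : I.card + J.card = k) :
    Function.Injective (tgt k I J) := by
  intro x y hxy
  by_cases hxI : x ∈ I <;> by_cases hyI : y ∈ I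
  · -- both in I
    rw [tgt_I hxI, tgt_I hyI] at hxy
    have hx1 := rk_lt_card hxI
    have hy1 := rk_lt_card hyI
    exact rk_inj hxI hyI (by omega)
  · by_cases hyJ : y ∈ J
    · rw [tgt_I hxI, tgt_J hyI hyJ] at hxy
      have hx1 := rk_lt_card hxI
      have hy1 := rk_lt_card hyJ
      omega
    · rw [tgt_I hxI, tgt_O hyI hyJ] at hxy
      have hx1 := rk_lt_card hxI
      omega
  · by_cases hxJ : x ∈ J
    · rw [tgt_J hxI hxJ, tgt_I hyI] at hxy
      have hx1 := rk_lt_card hxJ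
      have hy1 := rk_lt_card hyI
      omega
    · rw [tgt_O hxI hxJ, tgt_I hyI] at hxy
      have hy1 := rk_lt_card hyI
      omega
  · by_cases hxJ : x ∈ J <;> by_cases hyJ : y ∈ J
    · rw [tgt_J hxI hxJ, tgt_J hyI hyJ] at hxy
      exact rk_inj hxJ hyJ hxy
    · rw [tgt_J hxI hxJ, tgt_O hyI hyJ] at hxy
      have hx1 := rk_lt_card hxJ
      omega
    · rw [tgt_O hxI hxJ, tgt_J hyI hyJ] at hxy
      have hy1 := rk_lt_card hyJ
      omega
    · rw [tgt_O hxI hxJ, tgt_O hyI hyJ] at hxy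
      have hx : x ∈ (I ∪ J)ᶜ := by simp [Finset.mem_union, hxI, hxJ]
      have hy : y ∈ (I ∪ J)ᶜ := by simp [Finset.mem_union, hyI, hyJ]
      exact rk_inj hx hy (by omega)

lemma wIJ_at (hk1 : 1 ≤ k) (hcard : I.card + J.card = k) (v : Fin n → ℝ)
    (m : Fin n) (x₀ : Fin n) (h : tgt k I J x₀ = (m : ℕ)) :
    wIJ k I J v m = sgn I x₀ * v x₀ :=
  wIJ_eq v m x₀ h (fun x hx => tgt_injective hk1 hcard (by rw [hx, ← h]))

lemma sum_elt_lam (lam : Fin n → ℤ) (S : Finset (Fin n)) :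
    (∑ l : Fin S.card,
      ((lam (elt S (l : ℕ) l.isLt) : ℝ) - (((elt S (l : ℕ) l.isLt : Fin n) : ℕ) + 1)))
    = ∑ x ∈ S, ((lam x : ℝ) - ((x : ℕ) + 1)) :=
  sum_elt S (fun x => (lam x : ℝ) - ((x : ℕ) + 1))

end Helpers3

set_option maxHeartbeats 1000000 in
/-- no self-dual pair satisfies `0 ≤ t_{(I,J)} < k/2`. -/
theorem no_selfDual_with_small_t
    (n k : ℕ) (hn : 3 ≤ n) (hk1 : 1 ≤ k) (hkn : k ≤ n)
    (lam : Fin n → ℤ) (hdom : ∀ i j : Fin n, i ≤ j → lam j ≤ lam i) (hnn : ∀ i, 0 ≤ lam i) :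
    ¬ ∃ I J : Finset (Fin n), Disjoint I J ∧ I.card + J.card = k ∧
        SelfDual k lam I J ∧ 0 ≤ tIJ lam I J ∧ tIJ lam I J < (k : ℝ) / 2 := by
  rintro ⟨I, J, hd, hcard, hsd, ht0, htk⟩
  have hA : 1 - 1 < n := by omega
  have hB : k - 1 < n := by omega
  have hk0 : (0 : ℝ) < k := Nat.cast_pos.mpr hk1
  set T : ℝ := tIJ lam I J with hTdef
  -- the integer parts of the coordinates of λ + ρ
  set z : Fin n → ℤ := fun x => lam x + n - (x : ℕ) - 1 with hzdef
  have hvz : ∀ x, lamRho n lam x = (z x : ℝ) + 1 / 2 := fun x => lamRho_eq lam x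
  have hz0 : ∀ x, 0 ≤ z x := by
    intro x
    have h1 := hnn x
    have h2 : (x : ℕ) < n := x.isLt
    simp only [hzdef]
    omega
  have hzmono : ∀ x y : Fin n, x < y → z y < z x := by
    intro x y hxy
    have h1 := hdom x y (le_of_lt hxy)
    have h2 : (x : ℕ) < (y : ℕ) := hxy
    simp only [hzdef]
    omega
  -- t as a difference of sums
  have hT : ∑ x ∈ J, lamRho n lam x - ∑ x ∈ I, lamRho n lam x = -T := by
    rw [hTdef, tIJ, sum_elt_lam, sum_elt_lam]
    have key : ∀ S : Finset (Fin n), ∑ x ∈ S, lamRho n lam x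
        = (∑ x ∈ S, ((lam x : ℝ) - ((x : ℕ) + 1))) + S.card * ((n : ℝ) + 1 / 2) := by
      intro S
      have h1 : ∀ x ∈ S, lamRho n lam x
          = ((lam x : ℝ) - ((x : ℕ) + 1)) + ((n : ℝ) + 1 / 2) := by
        intro x _
        simp only [lamRho, rho]
        ring
      rw [Finset.sum_congr rfl h1, Finset.sum_add_distrib, Finset.sum_const, nsmul_eq_mul]
    rw [key, key]
    ring
  have hcEq : cIJ k lam I J * k = -T - ((k : ℝ) * n - (k : ℝ) * k / 2) := by
    rw [cIJ, Finset.sum_sub_distrib, sum_rho hk1 hkn, sum_wIJ hk1 hkn hd hcard, hT]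
    field_simp
  -- self-duality at l = 1
  have hSD := hsd 1 le_rfl hk1 hA hB
  set m₀ : Fin n := ⟨1 - 1, hA⟩ with hm₀
  set m₁ : Fin n := ⟨k - 1, hB⟩ with hm₁
  have he0 : (∑ i ∈ Finset.univ.filter (fun i : Fin n => (i : ℕ) < k), eps n i) m₀ = 1 :=
    eps_sum_eq_one m₀ (show 1 - 1 < k by omega)
  have he1 : (∑ i ∈ Finset.univ.filter (fun i : Fin n => (i : ℕ) < k), eps n i) m₁ = 1 :=
    eps_sum_eq_one m₁ (show k - 1 < k by omega)
  have hr0 : rho n m₀ = (n : ℝ) - (((1 - 1 : ℕ) : ℝ) + 1) + 1 / 2 := rfl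
  have hr1 : rho n m₁ = (n : ℝ) - (((k - 1 : ℕ) : ℝ) + 1) + 1 / 2 := rfl
  have hc0 : ((1 - 1 : ℕ) : ℝ) = 0 := by norm_num
  have hc1 : ((k - 1 : ℕ) : ℝ) = (k : ℝ) - 1 := by
    push_cast [Nat.cast_sub hk1]
    ring
  simp only [muIJ] at hSD
  rw [he0, he1, mul_one, hr0, hr1, hc0, hc1] at hSD
  -- case analysis
  rcases J.eq_empty_or_nonempty with hJe | hJne
  · -- J empty: both ends of μ come from I with negative sign
    have hIc : I.card = k := by
      have : J.card = 0 := by rw [hJe]; rfl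
      omega
    have hIne : I.Nonempty := Finset.card_pos.mp (by omega)
    set a : Fin n := I.max' hIne with ha
    set b : Fin n := I.min' hIne with hb
    have haI : a ∈ I := I.max'_mem hIne
    have hbI : b ∈ I := I.min'_mem hIne
    have hta : tgt k I J a = (m₀ : ℕ) := by
      show tgt k I J a = 1 - 1
      rw [tgt_I haI, ha, rk_max hIne]
      omega
    have htb : tgt k I J b = (m₁ : ℕ) := by
      show tgt k I J b = k - 1
      rw [tgt_I hbI, hb, rk_min hIne]
      omega
    have hA0 : wIJ k I J (lamRho n lam) m₀ = -((z a : ℝ) + 1 / 2) := by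
      rw [wIJ_at hk1 hcard _ m₀ a hta, hvz]
      simp [sgn, haI]
    have hA1 : wIJ k I J (lamRho n lam) m₁ = -((z b : ℝ) + 1 / 2) := by
      rw [wIJ_at hk1 hcard _ m₁ b htb, hvz]
      simp [sgn, hbI]
    rw [hA0, hA1] at hSD
    have hE : (-(z a : ℝ) - (z b : ℝ) - 1) * k = -2 * T := by
      linear_combination (k : ℝ) * hSD + 2 * hcEq
    have hza : (0 : ℝ) ≤ (z a : ℝ) := by exact_mod_cast hz0 a
    have hzb : (0 : ℝ) ≤ (z b : ℝ) := by exact_mod_cast hz0 b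
    nlinarith [hE, hza, hzb, hk0, ht0, htk]
  · rcases I.eq_empty_or_nonempty with hIe | hIne
    · -- I empty: both ends come from J with positive sign
      have hJc : J.card = k := by
        have : I.card = 0 := by rw [hIe]; rfl
        omega
      set a : Fin n := J.min' hJne with ha
      set b : Fin n := J.max' hJne with hb
      have haJ : a ∈ J := J.min'_mem hJne
      have hbJ : b ∈ J := J.max'_mem hJne
      have hanI : a ∉ I := Finset.disjoint_right.mp hd haJ
      have hbnI : b ∉ I := Finset.disjoint_right.mp hd hbJ
      have hta : tgt k I J a = (m₀ : ℕ) := by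
        show tgt k I J a = 1 - 1
        rw [tgt_J hanI haJ, ha, rk_min hJne]
      have htb : tgt k I J b = (m₁ : ℕ) := by
        show tgt k I J b = k - 1
        rw [tgt_J hbnI hbJ, hb, rk_max hJne]
        omega
      have hA0 : wIJ k I J (lamRho n lam) m₀ = (z a : ℝ) + 1 / 2 := by
        rw [wIJ_at hk1 hcard _ m₀ a hta, hvz]
        simp [sgn, hanI]
      have hA1 : wIJ k I J (lamRho n lam) m₁ = (z b : ℝ) + 1 / 2 := by
        rw [wIJ_at hk1 hcard _ m₁ b htb, hvz]
        simp [sgn, hbnI]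
      rw [hA0, hA1] at hSD
      have hE : ((z a : ℝ) + (z b : ℝ) + 1) * k = -2 * T := by
        linear_combination (k : ℝ) * hSD + 2 * hcEq
      have hza : (0 : ℝ) ≤ (z a : ℝ) := by exact_mod_cast hz0 a
      have hzb : (0 : ℝ) ≤ (z b : ℝ) := by exact_mod_cast hz0 b
      nlinarith [hE, hza, hzb, hk0, ht0, htk]
    · -- both nonempty
      set a : Fin n := J.min' hJne with ha
      set b : Fin n := I.min' hIne with hb
      have haJ : a ∈ J := J.min'_mem hJne
      have hbI : b ∈ I := I.min'_mem hIne
      have hanI : a ∉ I := Finset.disjoint_right.mp hd haJ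
      have hta : tgt k I J a = (m₀ : ℕ) := by
        show tgt k I J a = 1 - 1
        rw [tgt_J hanI haJ, ha, rk_min hJne]
      have htb : tgt k I J b = (m₁ : ℕ) := by
        show tgt k I J b = k - 1
        rw [tgt_I hbI, hb, rk_min hIne]
        omega
      have hA0 : wIJ k I J (lamRho n lam) m₀ = (z a : ℝ) + 1 / 2 := by
        rw [wIJ_at hk1 hcard _ m₀ a hta, hvz]
        simp [sgn, hanI]
      have hA1 : wIJ k I J (lamRho n lam) m₁ = -((z b : ℝ) + 1 / 2) := by
        rw [wIJ_at hk1 hcard _ m₁ b htb, hvz]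
        simp [sgn, hbI]
      rw [hA0, hA1] at hSD
      have hE : ((z a : ℝ) - (z b : ℝ)) * k = -2 * T := by
        linear_combination (k : ℝ) * hSD + 2 * hcEq
      have h1 : (z a : ℝ) - (z b : ℝ) ≤ 0 := by nlinarith [hE, hk0, ht0]
      have h2 : (-1 : ℝ) < (z a : ℝ) - (z b : ℝ) := by nlinarith [hE, hk0, htk]
      have hz1 : z a ≤ z b := by exact_mod_cast sub_nonpos.mp h1
      have hz2 : z b - 1 < z a := by
        have : (z b : ℝ) - 1 < (z a : ℝ) := by linarith
        exact_mod_cast this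
      have hne : a ≠ b := fun h => hanI (h ▸ hbI)
      rcases lt_or_gt_of_ne hne with hlt | hgt
      · have := hzmono a b hlt
        omega
      · have := hzmono b a hgt
        omega


end
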